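/- Let p ∈ C⁰(closure Ω) with min p > 1, δ ≥ 0, and for x, y ∈ closure Ω and a ∈ ℝ^d set F(x,a) = (δ+|a|)^{(p(x)-2)/2} a. Then there exists s > 1 (which can be chosen close to 1 when |x−y| is small) and a constant C depending only on p⁻ = min p, p⁺ = max p, δ, and s such that for all x, y ∈ closure Ω and a ∈ ℝ^d: |F(x,a) − F(y,a)|² ≤ C·|p(x) − p(y)|²·(1 + |a|^{p(x)·s}). -/

import Mathlib

/-!
Since `r ↦ t^r` is convex, `|t^α - t^β| ≤ |α - β| |log t| (t^α + t^β)` for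
`t = δ + |a| > 0`. Multiplying by `|a| ≤ t` leaves `|log t| t^(p/2)` with `p ∈ [p⁻, p⁺]`, and the
logarithm is absorbed by `t^(p/2)` near `0` and by an extra half power near `∞`. Choosing
`s = (p⁺ + 1) / p⁻` gives `p(x) s ≥ p⁺ + 1`, so that extra power fits below `t^(p(x) s / 2)`,
which is in turn comparable to `1 + |a|^(p(x) s / 2)`.
-/

open Real Set

namespace Real

theorem rpow_sub_rpow_le {t : ℝ} (ht : 0 < t) (α β : ℝ) :
    t ^ α - t ^ β ≤ |α - β| * |log t| * t ^ α := by
  have hexp : log t * (β - α) + 1 ≤ t ^ (β - α) := by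
    rw [rpow_def_of_pos ht]; exact add_one_le_exp _
  have hsplit : t ^ β = t ^ α * t ^ (β - α) := by rw [← rpow_add ht, add_sub_cancel]
  have hlog : (α - β) * log t ≤ |α - β| * |log t| := abs_mul (α - β) (log t) ▸ le_abs_self _
  rw [hsplit]
  nlinarith [rpow_pos_of_pos ht α]

theorem abs_rpow_sub_rpow_le {t : ℝ} (ht : 0 < t) (α β : ℝ) :
    |t ^ α - t ^ β| ≤ |α - β| * |log t| * (t ^ α + t ^ β) := by
  have hα := rpow_pos_of_pos ht α
  have hβ := rpow_pos_of_pos ht β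
  have hαβ := rpow_sub_rpow_le ht α β
  have hβα := rpow_sub_rpow_le ht β α
  rw [abs_sub_comm β] at hβα
  refine abs_sub_le_iff.2 ⟨hαβ.trans ?_, hβα.trans ?_⟩ <;> gcongr <;> linarith

theorem abs_log_mul_rpow_le {t γ g ε e : ℝ} (ht : 0 < t) (hg : 0 < g) (hε : 0 < ε)
    (hgγ : g ≤ γ) (hγe : γ + ε ≤ e) :
    |log t| * t ^ γ ≤ (1 / g + 1 / ε) * (1 + t ^ e) := by
  have hte := rpow_pos_of_pos ht e
  have hC : 0 < 1 / g + 1 / ε := by positivity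
  rcases le_total t 1 with h1 | h1
  · have hsmall : |log t| * t ^ γ ≤ 1 / g := calc
      |log t| * t ^ γ ≤ |log t| * t ^ g :=
        mul_le_mul_of_nonneg_left (rpow_le_rpow_of_exponent_ge ht h1 hgγ) (abs_nonneg _)
      _ = |log t * t ^ g| := by rw [abs_mul, abs_of_pos (rpow_pos_of_pos ht g)]
      _ ≤ 1 / g := (abs_log_mul_self_rpow_lt t g ht h1 hg).le
    have : 1 / g ≤ (1 / g + 1 / ε) * 1 := by rw [mul_one]; linarith [one_div_pos.2 hε]
    nlinarith
  · have hlarge : |log t| * t ^ γ ≤ t ^ e / ε := calc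
      |log t| * t ^ γ ≤ t ^ ε / ε * t ^ γ := by
        rw [abs_of_nonneg (log_nonneg h1)]; gcongr; exact log_le_rpow_div ht.le hε
      _ = t ^ (γ + ε) / ε := by rw [rpow_add ht]; ring
      _ ≤ t ^ e / ε := by gcongr
    have : t ^ e / ε ≤ (1 / g + 1 / ε) * t ^ e := by
      rw [div_eq_mul_one_div, mul_comm]; gcongr; linarith [one_div_pos.2 hg]
    nlinarith

theorem add_rpow_le_mul_one_add_rpow {δ u e E : ℝ} (hδ : 0 ≤ δ) (hu : 0 ≤ u) (he : 0 ≤ e)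
    (heE : e ≤ E) : (δ + u) ^ e ≤ (2 * (1 + δ)) ^ E * (1 + u ^ e) := by
  have hK : (2 * (1 + δ)) ^ e ≤ (2 * (1 + δ)) ^ E :=
    rpow_le_rpow_of_exponent_le (by linarith) heE
  have hue := rpow_nonneg hu e
  rcases le_total u 1 with h1 | h1
  · calc (δ + u) ^ e ≤ (2 * (1 + δ)) ^ e := by gcongr; linarith
      _ ≤ (2 * (1 + δ)) ^ E * (1 + u ^ e) := by nlinarith [rpow_pos_of_pos (by linarith : (0:ℝ) < 2 * (1 + δ)) E]
  · calc (δ + u) ^ e ≤ (2 * (1 + δ) * u) ^ e := by gcongr; nlinarith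
      _ = (2 * (1 + δ)) ^ e * u ^ e := mul_rpow (by linarith) hu
      _ ≤ (2 * (1 + δ)) ^ E * (1 + u ^ e) := by gcongr; linarith

theorem one_add_rpow_half_sq_le {u : ℝ} (hu : 0 ≤ u) (r : ℝ) :
    (1 + u ^ (r / 2)) ^ 2 ≤ 2 * (1 + u ^ r) := by
  have hsq : (u ^ (r / 2)) ^ 2 = u ^ r := by
    rw [← rpow_natCast, ← rpow_mul hu]; norm_num
  nlinarith [sq_nonneg (u ^ (r / 2) - 1)]


theorem abs_rpow_sub_rpow_mul_le {δ u m M p q e E : ℝ} (hδ : 0 ≤ δ) (hu : 0 ≤ u) (hm : 0 < m)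
    (hp : p ∈ Icc m M) (hq : q ∈ Icc m M) (he : M + 1 ≤ 2 * e) (heE : e ≤ E) :
    |(δ + u) ^ ((p - 2) / 2) - (δ + u) ^ ((q - 2) / 2)| * u ≤
      (2 / m + 2) * (1 + (2 * (1 + δ)) ^ E) * |p - q| * (1 + u ^ e) := by
  rcases hu.eq_or_lt with rfl | hu
  · rw [mul_zero]; have := rpow_nonneg le_rfl e; positivity
  set t := δ + u
  have ht : 0 < t := by positivity
  have hlog : ∀ r ∈ Icc m M, |log t| * t ^ (r / 2) ≤ (2 / m + 2) * (1 + t ^ e) := fun r hr => by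
    simpa [one_div_div] using abs_log_mul_rpow_le ht (half_pos hm) one_half_pos
      (by linarith [hr.1]) (by linarith [hr.2])
  have hshift : ∀ r : ℝ, t ^ ((r - 2) / 2) * u ≤ t ^ (r / 2) := fun r => calc
    t ^ ((r - 2) / 2) * u ≤ t ^ ((r - 2) / 2) * t := by gcongr; linarith
    _ = t ^ (r / 2) := by rw [← rpow_add_one ht.ne']; ring_nf
  have hδu : 1 + t ^ e ≤ (1 + (2 * (1 + δ)) ^ E) * (1 + u ^ e) := by
    have := add_rpow_le_mul_one_add_rpow hδ hu.le (by linarith [hp.1, hp.2]) heE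
    nlinarith [rpow_nonneg hu.le e, rpow_pos_of_pos (by linarith : (0:ℝ) < 2 * (1 + δ)) E]
  calc |t ^ ((p - 2) / 2) - t ^ ((q - 2) / 2)| * u
      ≤ |(p - 2) / 2 - (q - 2) / 2| * |log t| * (t ^ ((p - 2) / 2) + t ^ ((q - 2) / 2)) * u := by
        gcongr; exact abs_rpow_sub_rpow_le ht _ _
    _ = |p - q| / 2 * (|log t| * (t ^ ((p - 2) / 2) * u) + |log t| * (t ^ ((q - 2) / 2) * u)) := by
        rw [show (p - 2) / 2 - (q - 2) / 2 = (p - q) / 2 by ring, abs_div, abs_two]; ring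
    _ ≤ |p - q| / 2 * (|log t| * t ^ (p / 2) + |log t| * t ^ (q / 2)) := by
        gcongr <;> exact hshift _
    _ ≤ |p - q| / 2 * (2 * ((2 / m + 2) * (1 + t ^ e))) := by
        gcongr; linarith [hlog p hp, hlog q hq]
    _ ≤ |p - q| * ((2 / m + 2) * ((1 + (2 * (1 + δ)) ^ E) * (1 + u ^ e))) := by
        rw [← mul_assoc, div_mul_cancel₀ _ two_ne_zero]; gcongr
    _ = (2 / m + 2) * (1 + (2 * (1 + δ)) ^ E) * |p - q| * (1 + u ^ e) := by ring

end Real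

theorem stmt11 {d : ℕ} (Ω : Set (EuclideanSpace ℝ (Fin d)))
    (hΩ : Bornology.IsBounded Ω)
    (p : EuclideanSpace ℝ (Fin d) → ℝ) (hp : ContinuousOn p (closure Ω))
    (hp1 : ∀ x ∈ closure Ω, 1 < p x) (δ : ℝ) (hδ : 0 ≤ δ) :
    ∃ s > (1:ℝ), ∃ C > (0:ℝ), ∀ x ∈ closure Ω, ∀ y ∈ closure Ω,
      ∀ a : EuclideanSpace ℝ (Fin d),
        ‖(δ + ‖a‖) ^ ((p x - 2) / 2) • a - (δ + ‖a‖) ^ ((p y - 2) / 2) • a‖ ^ 2 ≤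
          C * |p x - p y| ^ 2 * (1 + ‖a‖ ^ (p x * s)) := by
  rcases (closure Ω).eq_empty_or_nonempty with hempty | hne
  · exact ⟨2, one_lt_two, 1, one_pos, by simp [hempty]⟩
  obtain ⟨xm, hxm, hmin⟩ := hΩ.isCompact_closure.exists_isMinOn hne hp
  obtain ⟨xM, hxM, hmax⟩ := hΩ.isCompact_closure.exists_isMaxOn hne hp
  set m := p xm
  set M := p xM
  have hm : 0 < m := by linarith [hp1 xm hxm]
  have hmM : m ≤ M := hmin hxM
  set s := (M + 1) / m with hs
  have hs1 : 1 < s := by rw [hs, lt_div_iff₀ hm]; linarith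
  set C := (2 / m + 2) * (1 + (2 * (1 + δ)) ^ (M * s / 2))
  refine ⟨s, hs1, 2 * C ^ 2, by positivity, fun x hx y hy a => ?_⟩
  have hpx : p x ∈ Icc m M := ⟨hmin hx, hmax hx⟩
  have hpxs : M + 1 ≤ p x * s := calc
    M + 1 = m * s := (mul_div_cancel₀ _ hm.ne').symm
    _ ≤ p x * s := by gcongr; exact hpx.1
  have hbound := abs_rpow_sub_rpow_mul_le hδ (norm_nonneg a) hm hpx ⟨hmin hy, hmax hy⟩
    (e := p x * s / 2) (E := M * s / 2) (by linarith) (by gcongr; exact hpx.2)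
  rw [← sub_smul, norm_smul, Real.norm_eq_abs]
  calc (|(δ + ‖a‖) ^ ((p x - 2) / 2) - (δ + ‖a‖) ^ ((p y - 2) / 2)| * ‖a‖) ^ 2
      ≤ (C * |p x - p y| * (1 + ‖a‖ ^ (p x * s / 2))) ^ 2 := by gcongr
    _ = C ^ 2 * |p x - p y| ^ 2 * (1 + ‖a‖ ^ (p x * s / 2)) ^ 2 := by ring
    _ ≤ C ^ 2 * |p x - p y| ^ 2 * (2 * (1 + ‖a‖ ^ (p x * s))) := by
        gcongr; exact one_add_rpow_half_sq_le (norm_nonneg a) _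
    _ = 2 * C ^ 2 * |p x - p y| ^ 2 * (1 + ‖a‖ ^ (p x * s)) := by ring
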